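/- arXiv:2307.10415 — 5 statements merged into one kernel-verified Lean document; each statement's English description precedes it below -/
import Mathlib

section
/- Let d ≥ 3 be odd and n ≥ 1. Consider the map h_1: P^n → P^n sending [x_0,…,x_n] to [x_0^{d-2},…,x_n^{d-2}], restricted to the hypersurface V(x_0^d + ⋯ + x_n^d). Then this restriction is generically injective: for generic p on the hypersurface, if q lies on the hypersurface and h_1(p) = h_1(q) in P^n, then p = q. -/
/-!
Write `m = d - 2`, which is odd. If `q ^ m = c • p ^ m` coordinatewise with all `p i ≠ 0`, then
`q = γ • ζ • p` for an `m`-th root `γ` of `c` and a tuple `ζ` of `m`-th roots of unity, and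
`q` on the Fermat hypersurface puts `p` on the twisted hypersurface `∑ ζ i ^ 2 * x i ^ d = 0`.
Away from the finitely many twists by nonconstant tuples of roots of unity, `ζ ^ 2` is
constant, hence so is `ζ`, since squaring is injective on roots of unity of odd order.
These twists do not contain the Fermat hypersurface: under `x ↦ x ^ d` it maps onto the
hyperplane `∑ y i = 0`, which a finite union of other hyperplanes cannot cover.
-/

open MvPolynomial Finset

theorem Module.Dual.exists_forall_apply_ne_zero {k E ι : Type*} [Field k] [Infinite k]
    [AddCommGroup E] [Module k E] [Finite ι] {f : ι → Module.Dual k E} (hf : ∀ i, f i ≠ 0) :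
    ∃ x, ∀ i, f i x ≠ 0 := by
  by_contra! h
  obtain ⟨i, hi⟩ := Subspace.exists_eq_top_of_iUnion_eq_univ (p := fun i => LinearMap.ker (f i))
    (Set.eq_univ_of_forall fun x => by simpa using h x)
  exact hf i (LinearMap.ker_eq_top.mp hi)

theorem exists_sum_eq_zero_and_sum_mul_ne_zero {K σ : Type*} [Field K] [Infinite K] [Fintype σ]
    (T : Finset (σ → K)) (hT : ∀ w ∈ T, ∃ i j, w i ≠ w j) :
    ∃ y : σ → K, ∑ i, y i = 0 ∧ ∀ w ∈ T, ∑ i, w i * y i ≠ 0 := by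
  classical
  let form (w : σ → K) : Module.Dual K (σ → K) := ∑ i, w i • LinearMap.proj i
  have form_apply (w y : σ → K) : form w y = ∑ i, w i * y i := by simp [form]
  let H := LinearMap.ker (form 1)
  have form_ne_zero (w : T) : (form w).domRestrict H ≠ 0 := by
    intro h
    obtain ⟨i, j, hij⟩ := hT w w.2
    have hmem : Pi.single i 1 - Pi.single j 1 ∈ H := by
      simp [H, form_apply, mul_sub, sum_sub_distrib]
    exact hij (by
      simpa [form_apply, mul_sub, sum_sub_distrib, sub_eq_zero, Pi.single_apply] using
        LinearMap.congr_fun h ⟨_, hmem⟩)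
  obtain ⟨⟨y, hyH⟩, hy⟩ := Module.Dual.exists_forall_apply_ne_zero form_ne_zero
  exact ⟨y, by simpa [H, form_apply] using hyH,
    fun w hw => by simpa [form_apply] using hy ⟨w, hw⟩⟩

theorem eq_of_sq_eq_of_pow_eq_one {M : Type*} [Monoid M] {m : ℕ} (hm : Odd m) {x y : M}
    (hx : x ^ m = 1) (hy : y ^ m = 1) (h : x ^ 2 = y ^ 2) : x = y := by
  obtain ⟨k, rfl⟩ := hm
  have sq_pow (z : M) (hz : z ^ (2 * k + 1) = 1) : z = (z ^ 2) ^ (k + 1) := by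
    rw [← pow_mul, show 2 * (k + 1) = 2 * k + 1 + 1 by ring, pow_succ, hz, one_mul]
  rw [sq_pow x hx, sq_pow y hy, h]

theorem exists_eq_mul_rootOfUnity_mul {σ K : Type*} [Field K] [IsAlgClosed K] {m : ℕ}
    (hm : 0 < m) {c : K} (hc : c ≠ 0) {x y : σ → K} (hy : ∀ i, y i ≠ 0)
    (hxy : ∀ i, x i ^ m = c * y i ^ m) :
    ∃ γ ≠ 0, ∃ ζ : σ → K, (∀ i, ζ i ^ m = 1) ∧ ∀ i, x i = γ * ζ i * y i := by
  obtain ⟨γ, rfl⟩ := IsAlgClosed.exists_pow_nat_eq c hm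
  have hγ : γ ≠ 0 := by rintro rfl; simp [hm.ne'] at hc
  refine ⟨γ, hγ, fun i => x i / (γ * y i), fun i => ?_, fun i => ?_⟩
  · rw [div_pow, mul_pow, hxy i, div_self (by simp [hc, hy i])]
  · field_simp [hy i]

section Fermat

variable {σ K : Type*} [Fintype σ] [Field K]

noncomputable def diagonalForm (d : ℕ) (w : σ → K) : MvPolynomial σ K := ∑ i, C (w i) * X i ^ d

@[simp]
theorem eval_diagonalForm (d : ℕ) (w x : σ → K) :
    eval x (diagonalForm d w) = ∑ i, w i * x i ^ d := by
  simp [diagonalForm]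

variable (σ K) in
open Classical in
noncomputable def nonconstantRootTuples (m : ℕ) : Finset (σ → K) :=
  {w ∈ Fintype.piFinset fun _ => Polynomial.nthRootsFinset m (1 : K) | ∃ i j, w i ≠ w j}

theorem mem_nonconstantRootTuples {m : ℕ} (hm : 0 < m) {w : σ → K} :
    w ∈ nonconstantRootTuples σ K m ↔ (∀ i, w i ^ m = 1) ∧ ∃ i j, w i ≠ w j := by
  simp [nonconstantRootTuples, Polynomial.mem_nthRootsFinset hm]

open Classical in
theorem nonconstant_of_mem_nonconstantRootTuples {m : ℕ} {w : σ → K}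
    (hw : w ∈ nonconstantRootTuples σ K m) : ∃ i j, w i ≠ w j :=
  (mem_filter.mp hw).2

variable (σ K) in
noncomputable def genericityPoly (m : ℕ) : MvPolynomial σ K :=
  (∏ i, X i) * ∏ w ∈ nonconstantRootTuples σ K m, diagonalForm (m + 2) w

theorem eval_genericityPoly_ne_zero_iff {m : ℕ} {x : σ → K} :
    eval x (genericityPoly σ K m) ≠ 0 ↔
      (∀ i, x i ≠ 0) ∧ ∀ w ∈ nonconstantRootTuples σ K m, ∑ i, w i * x i ^ (m + 2) ≠ 0 := by
  simp [genericityPoly, prod_ne_zero_iff]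

theorem exists_fermat_point_eval_genericityPoly_ne_zero [IsAlgClosed K] [Nontrivial σ]
    (m : ℕ) :
    ∃ x : σ → K, x ≠ 0 ∧ ∑ i, x i ^ (m + 2) = 0 ∧ eval x (genericityPoly σ K m) ≠ 0 := by
  classical
  obtain ⟨y, hy, hyT⟩ := exists_sum_eq_zero_and_sum_mul_ne_zero
    (univ.image (Pi.single · 1) ∪ nonconstantRootTuples σ K m) <| by
      simp only [mem_union, mem_image, mem_univ, true_and]
      rintro w (⟨i, rfl⟩ | hw)
      · obtain ⟨j, hj⟩ := exists_ne i
        exact ⟨i, j, by simp [hj.symm]⟩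
      · exact nonconstant_of_mem_nonconstantRootTuples hw
  choose x hx using fun i => IsAlgClosed.exists_pow_nat_eq (y i) (show 0 < m + 2 by omega)
  have hy0 (i : σ) : y i ≠ 0 := by
    simpa [Pi.single_apply] using
      hyT (Pi.single i 1) (mem_union_left _ (mem_image_of_mem _ (mem_univ i)))
  have hx0 (i : σ) : x i ≠ 0 := fun h => hy0 i (by rw [← hx i, h, zero_pow (by omega)])
  refine ⟨x, fun h => hx0 (Classical.arbitrary σ) (congrFun h _), by simpa [hx] using hy,
    eval_genericityPoly_ne_zero_iff.mpr ⟨hx0, fun w hw => ?_⟩⟩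
  simpa [hx] using hyT w (mem_union_right _ hw)

theorem exists_eq_mul_of_pow_eq_mul_pow [IsAlgClosed K] [Nonempty σ] {m : ℕ} (hm : Odd m)
    {p q : σ → K} (hp : eval p (genericityPoly σ K m) ≠ 0) (hq : ∑ i, q i ^ (m + 2) = 0)
    {c : K} (hc : c ≠ 0) (hpq : ∀ i, q i ^ m = c * p i ^ m) :
    ∃ t, t ≠ 0 ∧ ∀ i, q i = t * p i := by
  obtain ⟨hp0, hpS⟩ := eval_genericityPoly_ne_zero_iff.mp hp
  obtain ⟨γ, hγ, ζ, hζ, hqζ⟩ := exists_eq_mul_rootOfUnity_mul hm.pos hc hp0 hpq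
  have hsum : ∑ i, ζ i ^ 2 * p i ^ (m + 2) = 0 := by
    have : ∑ i, q i ^ (m + 2) = γ ^ (m + 2) * ∑ i, ζ i ^ 2 * p i ^ (m + 2) := by
      rw [mul_sum]
      refine sum_congr rfl fun i _ => ?_
      rw [hqζ, mul_pow, mul_pow, pow_add (ζ i), hζ]
      ring
    simpa [hq, hγ] using this
  have hsq (i j : σ) : ζ i ^ 2 = ζ j ^ 2 := by
    by_contra h
    refine hpS _ ((mem_nonconstantRootTuples hm.pos).mpr ⟨fun i => ?_, i, j, h⟩) hsum
    rw [← pow_mul, mul_comm, pow_mul, hζ, one_pow]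
  obtain ⟨i₀⟩ := ‹Nonempty σ›
  have hζ₀ : ζ i₀ ≠ 0 := by intro h; simpa [h, hm.pos.ne'] using hζ i₀
  refine ⟨γ * ζ i₀, mul_ne_zero hγ hζ₀, fun i => ?_⟩
  rw [hqζ, eq_of_sq_eq_of_pow_eq_one hm (hζ i) (hζ i₀) (hsq i i₀)]

end Fermat

theorem power_map_generically_injective_on_fermat_odd_general {K : Type*} [Field K]
    [IsAlgClosed K] {n d : ℕ} (hn : 1 ≤ n) (hd : 3 ≤ d) (hodd : Odd d) :
    ∃ P : MvPolynomial (Fin (n + 1)) K,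
      (∃ p₀ : Fin (n + 1) → K, p₀ ≠ 0 ∧ (∑ i, p₀ i ^ d) = 0 ∧
        MvPolynomial.eval p₀ P ≠ 0) ∧
      ∀ p q : Fin (n + 1) → K, p ≠ 0 → q ≠ 0 →
        (∑ i, p i ^ d) = 0 → (∑ i, q i ^ d) = 0 →
        MvPolynomial.eval p P ≠ 0 →
        (∃ c : K, c ≠ 0 ∧ ∀ i, q i ^ (d - 2) = c * p i ^ (d - 2)) →
        ∃ t : K, t ≠ 0 ∧ ∀ i, q i = t * p i := by
  obtain ⟨m, rfl⟩ : ∃ m, d = m + 2 := ⟨d - 2, by omega⟩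
  have hm : Odd m := by simpa [Nat.odd_add] using hodd
  have : Nontrivial (Fin (n + 1)) := Fin.nontrivial_iff_two_le.mpr (by omega)
  refine ⟨genericityPoly (Fin (n + 1)) K m, exists_fermat_point_eval_genericityPoly_ne_zero m, ?_⟩
  rintro p q - - - hq hp ⟨c, hc, hpq⟩
  exact exists_eq_mul_of_pow_eq_mul_pow hm hp hq hc (by simpa using hpq)

/-- For odd `d ≥ 3`, the coordinatewise `(d-2)`-power map
`[x_0 : … : x_n] ↦ [x_0^{d-2} : … : x_n^{d-2}]` is generically injective on the Fermat
hypersurface `V(x_0^d + ⋯ + x_n^d) ⊂ P^n`: there is a polynomial `P` not vanishing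
identically on the hypersurface such that any two points of the hypersurface with the
same image, one of which satisfies `P ≠ 0`, coincide projectively. -/
theorem power_map_generically_injective_on_fermat_odd {K : Type*} [Field K]
    [IsAlgClosed K] [CharZero K] {n d : ℕ} (hn : 1 ≤ n) (hd : 3 ≤ d) (hodd : Odd d) :
    ∃ P : MvPolynomial (Fin (n + 1)) K,
      (∃ p₀ : Fin (n + 1) → K, p₀ ≠ 0 ∧ (∑ i, p₀ i ^ d) = 0 ∧
        MvPolynomial.eval p₀ P ≠ 0) ∧
      ∀ p q : Fin (n + 1) → K, p ≠ 0 → q ≠ 0 →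
        (∑ i, p i ^ d) = 0 → (∑ i, q i ^ d) = 0 →
        MvPolynomial.eval p P ≠ 0 →
        (∃ c : K, c ≠ 0 ∧ ∀ i, q i ^ (d - 2) = c * p i ^ (d - 2)) →
        ∃ t : K, t ≠ 0 ∧ ∀ i, q i = t * p i :=
  power_map_generically_injective_on_fermat_odd_general hn hd hodd
end

section
/- Let d ≥ 4 be even and n ≥ 1. Consider the map h_1: P^n → P^n sending [x_0,…,x_n] to [x_0^{d-2},…,x_n^{d-2}], restricted to the Fermat hypersurface V(x_0^d + ⋯ + x_n^d). Then for a generic point p on the hypersurface, the fiber h_1^{-1}(h_1(p)) intersected with the hypersurface consists exactly of the 2^n points [±p_0, ±p_1, …, ±p_n] (up to overall scalar). -/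
/-
Write `d = 2m + 2`. If `q ^ (2m) = c • p ^ (2m)` coordinatewise, the ratios `sᵢ = (qᵢ / pᵢ)²` are
`m`-th roots of the same `c`, and `∑ qᵢ ^ d = c ∑ sᵢ pᵢ ^ d`, so both points lying on the Fermat
hypersurface gives `∑ sᵢ pᵢ ^ d = 0`. After dividing `s` by one of its entries this is a relation
`∑ μᵢ pᵢ ^ d = 0` with `μ` a tuple of `m`-th roots of unity. There are finitely many such tuples, so
a point is generic when it has no zero coordinate and satisfies no such relation with `μ`
nonconstant. For generic `p` the ratios `sᵢ` are then all equal, i.e. `qᵢ = ± t pᵢ`, and the `2ⁿ`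
sign patterns up to a global sign give distinct points of `ℙⁿ`. Generic points exist on the
hypersurface: eliminating `x₀ ^ d` turns every excluded relation into a nonzero polynomial in
`x₁, …, xₙ`, and a nonzero polynomial over an infinite field does not vanish everywhere.
-/

open MvPolynomial

section Fiber

variable {K ι : Type*} [Field K]

def IsSignRescaling (p q : ι → K) : Prop :=
  ∃ t : K, t ≠ 0 ∧ ∃ ε : ι → K, (∀ i, ε i = 1 ∨ ε i = -1) ∧ ∀ i, q i = t * ε i * p i

theorem IsSignRescaling.pow_eq_mul_pow {p q : ι → K} (h : IsSignRescaling p q) {k : ℕ}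
    (hk : Even k) : ∃ c : K, c ≠ 0 ∧ ∀ i, q i ^ k = c * p i ^ k := by
  obtain ⟨t, ht, ε, hε, hq⟩ := h
  refine ⟨t ^ k, pow_ne_zero k ht, fun i => ?_⟩
  rcases hε i with h | h <;> simp [hq i, h, mul_pow, hk.neg_pow]

theorem isSignRescaling_of_sq_div_eq {p q : ι → K} (hp : ∀ i, p i ≠ 0) (hq : q ≠ 0)
    (h : ∀ i j, (q i / p i) ^ 2 = (q j / p j) ^ 2) : IsSignRescaling p q := by
  obtain ⟨l, hl : q l ≠ 0⟩ := Function.ne_iff.1 hq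
  have ht : q l / p l ≠ 0 := div_ne_zero hl (hp l)
  refine ⟨q l / p l, ht, fun i => q i / p i / (q l / p l), fun i => ?_, fun i => ?_⟩
  · rcases sq_eq_sq_iff_eq_or_eq_neg.1 (h i l) with h' | h' <;> simp [h', ht]
  · field_simp [hp i, hp l]

variable [Fintype ι]

theorem IsSignRescaling.sum_pow_eq_zero {p q : ι → K} (h : IsSignRescaling p q) {k : ℕ}
    (hk : Even k) (hp : ∑ i, p i ^ k = 0) : ∑ i, q i ^ k = 0 := by
  obtain ⟨c, -, hc⟩ := h.pow_eq_mul_pow hk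
  rw [Finset.sum_congr rfl fun i _ => hc i, ← Finset.mul_sum, hp, mul_zero]

theorem sq_div_eq_of_pow_eq_mul_pow {m : ℕ} {p q : ι → K} {c : K}
    (hgen : ∀ s : ι → K, (∀ i j, s i ^ m = s j ^ m) →
      ∑ i, s i * p i ^ (2 * m + 2) = 0 → ∀ i j, s i = s j)
    (hp : ∀ i, p i ≠ 0) (hqF : ∑ i, q i ^ (2 * m + 2) = 0) (hc : c ≠ 0)
    (hqc : ∀ i, q i ^ (2 * m) = c * p i ^ (2 * m)) :
    ∀ i j, (q i / p i) ^ 2 = (q j / p j) ^ 2 := by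
  have hpow : ∀ i, ((q i / p i) ^ 2) ^ m = c := fun i => by
    rw [← pow_mul, div_pow, hqc i, mul_div_assoc, div_self (pow_ne_zero _ (hp i)), mul_one]
  refine hgen (fun i => (q i / p i) ^ 2) (fun i j => by rw [hpow, hpow]) ?_
  have hterm : ∀ i, q i ^ (2 * m + 2) = c * ((q i / p i) ^ 2 * p i ^ (2 * m + 2)) := fun i => by
    rw [div_pow, pow_add, pow_add, hqc i]
    field_simp [hp i]
  rw [Finset.sum_congr rfl fun i _ => hterm i, ← Finset.mul_sum] at hqF
  exact (mul_eq_zero.1 hqF).resolve_left hc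

open Classical in
noncomputable def nonconstantRootsOfUnityTuples (m : ℕ) : Finset (ι → K) :=
  (Fintype.piFinset fun _ => Polynomial.nthRootsFinset m (1 : K)).filter
    fun μ => ∃ i j, μ i ≠ μ j

theorem mem_nonconstantRootsOfUnityTuples {m : ℕ} (hm : m ≠ 0) {μ : ι → K} :
    μ ∈ nonconstantRootsOfUnityTuples m ↔ (∀ i, μ i ^ m = 1) ∧ ∃ i j, μ i ≠ μ j := by
  simp [nonconstantRootsOfUnityTuples, Polynomial.mem_nthRootsFinset (Nat.pos_of_ne_zero hm)]

theorem exists_ne_of_mem_nonconstantRootsOfUnityTuples {m : ℕ} {μ : ι → K}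
    (hμ : μ ∈ nonconstantRootsOfUnityTuples m) : ∃ i j, μ i ≠ μ j := by
  simp only [nonconstantRootsOfUnityTuples, Finset.mem_filter] at hμ
  exact hμ.2

noncomputable def fermatGenericPoly (m d : ℕ) : MvPolynomial ι K :=
  (∏ i, X i) * ∏ μ ∈ nonconstantRootsOfUnityTuples m, ∑ i, C (μ i) * X i ^ d

theorem eval_fermatGenericPoly_ne_zero_iff {m d : ℕ} {p : ι → K} :
    eval p (fermatGenericPoly m d) ≠ 0 ↔
      (∀ i, p i ≠ 0) ∧ ∀ μ ∈ nonconstantRootsOfUnityTuples m, ∑ i, μ i * p i ^ d ≠ 0 := by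
  simp [fermatGenericPoly, Finset.prod_ne_zero_iff]

theorem eq_of_eval_fermatGenericPoly_ne_zero {m d : ℕ} (hm : m ≠ 0) {p : ι → K}
    (hP : eval p (fermatGenericPoly m d) ≠ 0) {s : ι → K} (hs : ∀ i j, s i ^ m = s j ^ m)
    (hsum : ∑ i, s i * p i ^ d = 0) (i j : ι) : s i = s j := by
  by_contra hij
  have hsj : s j ≠ 0 := by
    intro hsj
    apply hij
    rw [hsj, ← pow_eq_zero_iff hm, hs i j, hsj, zero_pow hm]
  have hμ : (fun k => s k / s j) ∈ nonconstantRootsOfUnityTuples m := by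
    rw [mem_nonconstantRootsOfUnityTuples hm]
    refine ⟨fun k => by rw [div_pow, hs k j, div_self (pow_ne_zero m hsj)], i, j, ?_⟩
    rwa [Ne, div_left_inj' hsj]
  apply (eval_fermatGenericPoly_ne_zero_iff.1 hP).2 _ hμ
  simp_rw [div_mul_eq_mul_div, ← Finset.sum_div, hsum, zero_div]

theorem pow_eq_mul_pow_iff_isSignRescaling {m : ℕ} (hm : m ≠ 0) {p q : ι → K}
    (hP : eval p (fermatGenericPoly m (2 * m + 2)) ≠ 0) (hq : q ≠ 0)
    (hqF : ∑ i, q i ^ (2 * m + 2) = 0) :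
    (∃ c : K, c ≠ 0 ∧ ∀ i, q i ^ (2 * m) = c * p i ^ (2 * m)) ↔ IsSignRescaling p q := by
  have hp := (eval_fermatGenericPoly_ne_zero_iff.1 hP).1
  refine ⟨fun ⟨c, hc, hqc⟩ => isSignRescaling_of_sq_div_eq hp hq ?_,
    fun h => h.pow_eq_mul_pow (even_two_mul m)⟩
  exact sq_div_eq_of_pow_eq_mul_pow
    (fun s hs hsum => eq_of_eval_fermatGenericPoly_ne_zero hm hP hs hsum) hp hqF hc hqc

end Fiber

section Counting

variable {K : Type*} [Field K] {n : ℕ}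

def signVector (σ : Fin n → ℤˣ) : Fin (n + 1) → K :=
  Fin.cons 1 fun j => ((σ j : ℤ) : K)

theorem signVector_injective [CharZero K] : Function.Injective (signVector (K := K) (n := n)) := by
  intro σ τ h
  funext j
  have hj := congrFun h j.succ
  simp only [signVector, Fin.cons_succ, Int.cast_inj] at hj
  exact Units.ext hj

theorem signVector_eq_one_or_neg_one (σ : Fin n → ℤˣ) (i : Fin (n + 1)) :
    signVector (K := K) σ i = 1 ∨ signVector (K := K) σ i = -1 :=
  Fin.cases (.inl rfl)
    (fun j => by rcases Int.units_eq_one_or (σ j) with h | h <;> simp [signVector, h]) i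

theorem exists_eq_mul_signVector {ε : Fin (n + 1) → K} (hε : ∀ i, ε i = 1 ∨ ε i = -1) :
    ∃ σ : Fin n → ℤˣ, ∀ i, ε i = ε 0 * signVector σ i := by
  have hsq : ε 0 * ε 0 = 1 := by rcases hε 0 with h | h <;> simp [h]
  have hunit : ∀ j : Fin n, ∃ u : ℤˣ, ((u : ℤ) : K) = ε 0 * ε j.succ := fun j => by
    rcases hε 0 with h | h <;> rcases hε j.succ with h' | h' <;> simp [h, h']
    exacts [⟨1, by simp⟩, ⟨-1, by simp⟩, ⟨-1, by simp⟩, ⟨1, by simp⟩]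
  choose σ hσ using hunit
  refine ⟨σ, Fin.cases (by simp [signVector]) fun j => ?_⟩
  simp [signVector, hσ, ← mul_assoc, hsq]

theorem ncard_isSignRescaling [CharZero K] {p : Fin (n + 1) → K} (hp : ∀ i, p i ≠ 0) :
    {x : Projectivization K (Fin (n + 1) → K) |
      ∃ (q : Fin (n + 1) → K) (hq : q ≠ 0), IsSignRescaling p q ∧
        x = Projectivization.mk K q hq}.ncard = 2 ^ n := by
  have hne : ∀ σ, signVector σ * p ≠ 0 := fun σ h =>
    hp 0 (by simpa [signVector] using congrFun h 0)
  have hrange : {x : Projectivization K (Fin (n + 1) → K) |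
      ∃ (q : Fin (n + 1) → K) (hq : q ≠ 0), IsSignRescaling p q ∧
        x = Projectivization.mk K q hq} =
      Set.range fun σ => Projectivization.mk K (signVector σ * p) (hne σ) := by
    ext x
    constructor
    · rintro ⟨q, hq, ⟨t, ht, ε, hε, hqε⟩, rfl⟩
      obtain ⟨σ, hσ⟩ := exists_eq_mul_signVector hε
      refine ⟨σ, (Projectivization.mk_eq_mk_iff' K _ _ _ _).2 ⟨(t * ε 0)⁻¹, funext fun i => ?_⟩⟩
      have hε0 : ε 0 ≠ 0 := by rcases hε 0 with h | h <;> simp [h]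
      simp only [Pi.smul_apply, Pi.mul_apply, smul_eq_mul, hqε i, hσ i]
      field_simp
    · rintro ⟨σ, rfl⟩
      exact ⟨_, hne σ,
        ⟨1, one_ne_zero, signVector σ, signVector_eq_one_or_neg_one σ, fun i => by simp⟩, rfl⟩
  have hinj : Function.Injective fun σ => Projectivization.mk K (signVector σ * p) (hne σ) := by
    intro σ τ h
    obtain ⟨a, ha⟩ := (Projectivization.mk_eq_mk_iff' K _ _ _ _).1 h
    have ha1 : a = 1 := by
      have h0 := congrFun ha 0
      simp only [Pi.smul_apply, Pi.mul_apply, smul_eq_mul, signVector, Fin.cons_zero, one_mul] at h0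
      exact (mul_eq_right₀ (hp 0)).1 h0
    subst ha1
    refine signVector_injective (funext fun i => mul_right_cancel₀ (hp i) ?_)
    simpa using (congrFun ha i).symm
  rw [hrange, Set.ncard_range_of_injective hinj, Nat.card_eq_fintype_card, Fintype.card_fun,
    Fintype.card_units_int, Fintype.card_fin]

end Counting

section Existence

theorem sum_C_mul_X_pow_ne_zero {R σ : Type*} [CommSemiring R] [Fintype σ] {d : ℕ} (hd : d ≠ 0)
    {c : σ → R} (hc : c ≠ 0) : ∑ j, C (c j) * X j ^ d ≠ 0 := by
  classical
  obtain ⟨k, hk⟩ := Function.ne_iff.1 hc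
  intro h
  apply hk
  simpa [coeff_sum, coeff_C_mul, coeff_X_pow, Finsupp.single_left_inj hd] using
    congrArg (coeff (Finsupp.single k d)) h

variable {K : Type*} [Field K]

theorem exists_fermat_eval_fermatGenericPoly_ne_zero [IsAlgClosed K] {n m d : ℕ} (hn : n ≠ 0)
    (hd : d ≠ 0) :
    ∃ p : Fin (n + 1) → K, p ≠ 0 ∧ ∑ i, p i ^ d = 0 ∧ eval p (fermatGenericPoly m d) ≠ 0 := by
  let B := nonconstantRootsOfUnityTuples (K := K) (ι := Fin (n + 1)) m
  -- the factors of `fermatGenericPoly` after substituting `x₀ ^ d = -(x₁ ^ d + ⋯ + xₙ ^ d)`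
  let G : MvPolynomial (Fin n) K := (∏ j, X j) * (∑ j, C 1 * X j ^ d) *
    ∏ μ ∈ B, ∑ j, C (μ j.succ - μ 0) * X j ^ d
  have hG : G ≠ 0 := by
    refine mul_ne_zero (mul_ne_zero (Finset.prod_ne_zero_iff.2 fun j _ => X_ne_zero j) ?_)
      (Finset.prod_ne_zero_iff.2 fun μ hμ => sum_C_mul_X_pow_ne_zero hd ?_)
    · exact sum_C_mul_X_pow_ne_zero hd
        (Function.ne_iff.2 ⟨⟨0, Nat.pos_of_ne_zero hn⟩, one_ne_zero⟩)
    · obtain ⟨i, i', hii'⟩ := exists_ne_of_mem_nonconstantRootsOfUnityTuples hμ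
      intro hμ0
      have hconst : ∀ i, μ i = μ 0 :=
        Fin.cases rfl fun j => sub_eq_zero.1 (congrFun hμ0 j)
      exact hii' ((hconst i).trans (hconst i').symm)
  obtain ⟨z, hz⟩ : ∃ z, eval z G ≠ 0 := by
    by_contra! h
    exact hG (MvPolynomial.funext fun z => by simp [h z])
  simp only [G, map_mul, map_prod, map_sum, map_pow, eval_C, eval_X, one_mul] at hz
  obtain ⟨hz', hzμ⟩ := mul_ne_zero_iff.1 hz
  obtain ⟨hz0, hzd⟩ := mul_ne_zero_iff.1 hz'
  obtain ⟨w, hw⟩ := IsAlgClosed.exists_pow_nat_eq (-∑ j, z j ^ d) (Nat.pos_of_ne_zero hd)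
  have hw0 : w ≠ 0 := by
    rintro rfl
    exact hzd (neg_eq_zero.1 (by rw [← hw, zero_pow hd]))
  refine ⟨Fin.cons w z, fun h => hw0 (congrFun h 0), by simp [Fin.sum_univ_succ, hw], ?_⟩
  rw [eval_fermatGenericPoly_ne_zero_iff]
  refine ⟨Fin.cases hw0 (Finset.prod_ne_zero_iff.1 hz0 · (Finset.mem_univ _)), fun μ hμ => ?_⟩
  convert Finset.prod_ne_zero_iff.1 hzμ μ hμ using 1
  simp [Fin.sum_univ_succ, hw, sub_mul, Finset.sum_sub_distrib, Finset.mul_sum]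
  ring

end Existence

/-- For even `d ≥ 4`, on the Fermat hypersurface
`V(x_0^d + ⋯ + x_n^d) ⊂ P^n`, the fiber of the coordinatewise `(d-2)`-power map through a
generic point `p` consists exactly of the `2^n` points `[±p_0 : … : ±p_n]`. -/
theorem power_map_fiber_on_fermat_even {K : Type*} [Field K]
    [IsAlgClosed K] [CharZero K] {n d : ℕ} (hn : 1 ≤ n) (hd : 4 ≤ d) (heven : Even d) :
    ∃ P : MvPolynomial (Fin (n + 1)) K,
      (∃ p₀ : Fin (n + 1) → K, p₀ ≠ 0 ∧ (∑ i, p₀ i ^ d) = 0 ∧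
        MvPolynomial.eval p₀ P ≠ 0) ∧
      ∀ p : Fin (n + 1) → K, p ≠ 0 → (∑ i, p i ^ d) = 0 →
        MvPolynomial.eval p P ≠ 0 →
        (∀ q : Fin (n + 1) → K, q ≠ 0 → (∑ i, q i ^ d) = 0 →
          ((∃ c : K, c ≠ 0 ∧ ∀ i, q i ^ (d - 2) = c * p i ^ (d - 2)) ↔
            (∃ t : K, t ≠ 0 ∧ ∃ ε : Fin (n + 1) → K,
              (∀ i, ε i = 1 ∨ ε i = -1) ∧ ∀ i, q i = t * ε i * p i))) ∧
        Set.ncard { x : Projectivization K (Fin (n + 1) → K) |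
          ∃ (q : Fin (n + 1) → K) (hq : q ≠ 0), (∑ i, q i ^ d) = 0 ∧
            (∃ c : K, c ≠ 0 ∧ ∀ i, q i ^ (d - 2) = c * p i ^ (d - 2)) ∧
            x = Projectivization.mk K q hq } = 2 ^ n := by
  obtain ⟨m, rfl⟩ : ∃ m, d = 2 * m + 2 := ⟨d / 2 - 1, by obtain ⟨r, rfl⟩ := heven; omega⟩
  have hm : m ≠ 0 := by omega
  refine ⟨fermatGenericPoly m (2 * m + 2),
    exists_fermat_eval_fermatGenericPoly_ne_zero (by omega) (by omega), fun p _ hpF hP => ?_⟩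
  have hfiber : ∀ q : Fin (n + 1) → K, q ≠ 0 → ∑ i, q i ^ (2 * m + 2) = 0 →
      ((∃ c : K, c ≠ 0 ∧ ∀ i, q i ^ (2 * m) = c * p i ^ (2 * m)) ↔ IsSignRescaling p q) :=
    fun q hq hqF => pow_eq_mul_pow_iff_isSignRescaling hm hP hq hqF
  refine ⟨hfiber, ?_⟩
  convert ncard_isSignRescaling (eval_fermatGenericPoly_ne_zero_iff.1 hP).1 using 2
  ext x
  constructor
  · rintro ⟨q, hq, hqF, hc, rfl⟩
    exact ⟨q, hq, (hfiber q hq hqF).1 hc, rfl⟩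
  · rintro ⟨q, hq, hs, rfl⟩
    have hqF := hs.sum_pow_eq_zero heven hpF
    exact ⟨q, hq, hqF, (hfiber q hq hqF).2 hs, rfl⟩
end

section
/- The binary cubics F = x_0 x_1 (x_0 - x_1) and G = (x_0 - 2x_1)(2x_0 - x_1)(x_0 + x_1) have the same Hessian variety: for both, the image of their zero locus (three points in P^1) under the map p ↦ [∂²F/∂x_0² (p), ∂²F/∂x_0∂x_1 (p), ∂²F/∂x_1² (p)] (resp. for G) equals the set {[1,-1,0], [0,-1,1], [1,0,-1]} ⊂ P². -/
open MvPolynomial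

/-- The Hessian map of a binary cubic `F`, sending `p ∈ K²` to the triple of second
partial derivatives of `F` evaluated at `p`. -/
noncomputable def binaryHessianVec {K : Type*} [CommRing K]
    (F : MvPolynomial (Fin 2) K) (p : Fin 2 → K) : Fin 3 → K :=
  ![MvPolynomial.eval p (MvPolynomial.pderiv 0 (MvPolynomial.pderiv 0 F)),
    MvPolynomial.eval p (MvPolynomial.pderiv 0 (MvPolynomial.pderiv 1 F)),
    MvPolynomial.eval p (MvPolynomial.pderiv 1 (MvPolynomial.pderiv 1 F))]

lemma pderiv_two' {K : Type*} [CommRing K] (i : Fin 2) :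
    pderiv i (2 : MvPolynomial (Fin 2) K) = 0 := by
  have h : (2 : MvPolynomial (Fin 2) K) = ((2 : ℕ) : MvPolynomial (Fin 2) K) := by norm_num
  rw [h, Derivation.map_natCast]

set_option maxHeartbeats 2000000 in
lemma hessF {K : Type*} [CommRing K] (p : Fin 2 → K) :
    binaryHessianVec (X 0 * X 1 * (X 0 - X 1)) p
      = ![2 * p 1, 2 * p 0 - 2 * p 1, -(2 * p 0)] := by
  funext i
  fin_cases i <;>
  simp only [binaryHessianVec, pderiv_mul, map_sub, map_add, pderiv_X,
    pderiv_two', Derivation.map_one_eq_zero, map_zero,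
    Pi.single_eq_same, Pi.single_eq_of_ne (by decide : (1:Fin 2) ≠ 0),
    Pi.single_eq_of_ne (by decide : (0:Fin 2) ≠ 1), eval_mul, eval_add, eval_sub, eval_X,
    eval_zero, eval_ofNat, map_one, Matrix.cons_val_zero, Matrix.cons_val_one,
    Matrix.head_cons, Matrix.cons_val_two, Matrix.tail_cons] <;> ring

set_option maxHeartbeats 2000000 in
lemma hessG {K : Type*} [CommRing K] (p : Fin 2 → K) :
    binaryHessianVec ((X 0 - 2 * X 1) * (2 * X 0 - X 1) * (X 0 + X 1)) p
      = ![12 * p 0 - 6 * p 1, -(6 * p 0) - 6 * p 1, -(6 * p 0) + 12 * p 1] := by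
  funext i
  fin_cases i <;>
  simp only [binaryHessianVec, pderiv_mul, map_sub, map_add, pderiv_X,
    pderiv_two', Derivation.map_one_eq_zero, map_zero,
    Pi.single_eq_same, Pi.single_eq_of_ne (by decide : (1:Fin 2) ≠ 0),
    Pi.single_eq_of_ne (by decide : (0:Fin 2) ≠ 1), eval_mul, eval_add, eval_sub, eval_X,
    eval_zero, eval_ofNat, map_one, Matrix.cons_val_zero, Matrix.cons_val_one,
    Matrix.head_cons, Matrix.cons_val_two, Matrix.tail_cons] <;> ring

lemma nzA {K : Type*} [Field K] [CharZero K] : (![1, -1, 0] : Fin 3 → K) ≠ 0 := by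
  intro h; simpa using congrFun h 0

lemma nzB {K : Type*} [Field K] [CharZero K] : (![0, -1, 1] : Fin 3 → K) ≠ 0 := by
  intro h; simpa using congrFun h 2

lemma nzC {K : Type*} [Field K] [CharZero K] : (![1, 0, -1] : Fin 3 → K) ≠ 0 := by
  intro h; simpa using congrFun h 0

lemma mkhelp {K : Type*} [Field K] (v w : Fin 3 → K) (hv : v ≠ 0) (hw : w ≠ 0)
    (c : K) (h : c • w = v) :
    Projectivization.mk K v hv = Projectivization.mk K w hw :=
  (Projectivization.mk_eq_mk_iff' K v w hv hw).2 ⟨c, h⟩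

/-- The binary cubics `F = x₀x₁(x₀-x₁)` and
`G = (x₀-2x₁)(2x₀-x₁)(x₀+x₁)` have the same Hessian variety, namely the three points
`{[1,-1,0], [0,-1,1], [1,0,-1]} ⊂ P²`. -/
theorem hessian_variety_of_two_binary_cubics {K : Type*} [Field K]
    [IsAlgClosed K] [CharZero K] :
    (∀ F : MvPolynomial (Fin 2) K,
      (F = MvPolynomial.X 0 * MvPolynomial.X 1 * (MvPolynomial.X 0 - MvPolynomial.X 1) ∨
       F = (MvPolynomial.X 0 - 2 * MvPolynomial.X 1) *
            (2 * MvPolynomial.X 0 - MvPolynomial.X 1) *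
            (MvPolynomial.X 0 + MvPolynomial.X 1)) →
      { x : Projectivization K (Fin 3 → K) |
          ∃ (p : Fin 2 → K) (_ : p ≠ 0) (hv : binaryHessianVec F p ≠ 0),
            MvPolynomial.eval p F = 0 ∧
              x = Projectivization.mk K (binaryHessianVec F p) hv } =
      { x : Projectivization K (Fin 3 → K) |
          ∃ (v : Fin 3 → K) (hv : v ≠ 0),
            (v = ![1, -1, 0] ∨ v = ![0, -1, 1] ∨ v = ![1, 0, -1]) ∧
              x = Projectivization.mk K v hv }) := by
  intro F hF
  rcases hF with rfl | rfl
  · -- F case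
    ext x
    simp only [Set.mem_setOf_eq]
    constructor
    · rintro ⟨p, hp, hvne, heval, rfl⟩
      rw [show MvPolynomial.eval p (X 0 * X 1 * (X 0 - X 1)) = p 0 * p 1 * (p 0 - p 1) by
        simp] at heval
      rcases mul_eq_zero.1 heval with h | h
      · rcases mul_eq_zero.1 h with h0 | h1
        · -- p 0 = 0 : hess = 2 p1 • ![1,-1,0]
          have h1 : p 1 ≠ 0 := fun h1 => hp (funext fun i => by fin_cases i <;> simp [h0, h1])
          exact ⟨![1, -1, 0], nzA, Or.inl rfl,
            (mkhelp _ _ hvne nzA (2 * p 1) (by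
              funext i; fin_cases i <;>
                simp [hessF, h0, Pi.smul_apply, smul_eq_mul] <;> ring))⟩
        · -- p 1 = 0 : hess = (-2 p0) • ![0,-1,1]
          have h0 : p 0 ≠ 0 := fun h0 => hp (funext fun i => by fin_cases i <;> simp [h0, h1])
          exact ⟨![0, -1, 1], nzB, Or.inr (Or.inl rfl),
            (mkhelp _ _ hvne nzB (-(2 * p 0)) (by
              funext i; fin_cases i <;>
                simp [hessF, h1, Pi.smul_apply, smul_eq_mul] <;> ring))⟩
      · -- p 0 = p 1 : hess = 2 p1 • ![1,0,-1]
        have h01 : p 0 = p 1 := sub_eq_zero.1 h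
        have h1 : p 1 ≠ 0 := fun h1 => hp (funext fun i => by
          fin_cases i <;> simp [h01, h1])
        exact ⟨![1, 0, -1], nzC, Or.inr (Or.inr rfl),
          (mkhelp _ _ hvne nzC (2 * p 1) (by
            funext i; fin_cases i <;>
              simp [hessF, h01, Pi.smul_apply, smul_eq_mul] <;> ring))⟩
    · rintro ⟨v, hv, (rfl | rfl | rfl), rfl⟩
      · refine ⟨![0, 1], by intro h; simpa using congrFun h 1, ?_, ?_, ?_⟩
        · rw [hessF]; intro h; simpa using congrFun h 0
        · simp
        · exact (mkhelp _ _ _ hv (2 : K) (by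
            funext i; fin_cases i <;>
              simp [hessF, Pi.smul_apply, smul_eq_mul] <;> ring)).symm
      · refine ⟨![1, 0], by intro h; simpa using congrFun h 0, ?_, ?_, ?_⟩
        · rw [hessF]; intro h; simpa using congrFun h 1
        · simp
        · exact (mkhelp _ _ _ hv (-2 : K) (by
            funext i; fin_cases i <;>
              simp [hessF, Pi.smul_apply, smul_eq_mul] <;> ring)).symm
      · refine ⟨![1, 1], by intro h; simpa using congrFun h 0, ?_, ?_, ?_⟩
        · rw [hessF]; intro h; simpa using congrFun h 0
        · simp
        · exact (mkhelp _ _ _ hv (2 : K) (by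
            funext i; fin_cases i <;>
              simp [hessF, Pi.smul_apply, smul_eq_mul] <;> ring)).symm
  · -- G case
    ext x
    simp only [Set.mem_setOf_eq]
    constructor
    · rintro ⟨p, hp, hvne, heval, rfl⟩
      rw [show MvPolynomial.eval p ((X 0 - 2 * X 1) * (2 * X 0 - X 1) * (X 0 + X 1))
          = (p 0 - 2 * p 1) * (2 * p 0 - p 1) * (p 0 + p 1) by simp] at heval
      rcases mul_eq_zero.1 heval with h | h
      · rcases mul_eq_zero.1 h with h0 | h1
        · -- p 0 = 2 p 1 : hess = 18 p1 • ![1,-1,0]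
          have e : p 0 = 2 * p 1 := sub_eq_zero.1 h0
          have h1 : p 1 ≠ 0 := fun h1 => hp (funext fun i => by
            fin_cases i <;> simp [e, h1])
          exact ⟨![1, -1, 0], nzA, Or.inl rfl,
            (mkhelp _ _ hvne nzA (18 * p 1) (by
              funext i; fin_cases i <;>
                simp [hessG, e, Pi.smul_apply, smul_eq_mul] <;> ring))⟩
        · -- p 1 = 2 p 0 : hess = 18 p0 • ![0,-1,1]
          have e : p 1 = 2 * p 0 := by linear_combination -h1
          have h0 : p 0 ≠ 0 := fun h0 => hp (funext fun i => by
            fin_cases i <;> simp [e, h0])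
          exact ⟨![0, -1, 1], nzB, Or.inr (Or.inl rfl),
            (mkhelp _ _ hvne nzB (18 * p 0) (by
              funext i; fin_cases i <;>
                simp [hessG, e, Pi.smul_apply, smul_eq_mul] <;> ring))⟩
      · -- p 0 = - p 1 : hess = (-18 p1) • ![1,0,-1]
        have e : p 0 = -p 1 := by linear_combination h
        have h1 : p 1 ≠ 0 := fun h1 => hp (funext fun i => by
          fin_cases i <;> simp [e, h1])
        exact ⟨![1, 0, -1], nzC, Or.inr (Or.inr rfl),
          (mkhelp _ _ hvne nzC (-(18 * p 1)) (by
            funext i; fin_cases i <;>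
              simp [hessG, e, Pi.smul_apply, smul_eq_mul] <;> ring))⟩
    · rintro ⟨v, hv, (rfl | rfl | rfl), rfl⟩
      · refine ⟨![2, 1], by intro h; simpa using congrFun h 1, ?_, ?_, ?_⟩
        · rw [hessG]; intro h
          have := congrFun h 0; norm_num at this
        · simp
        · exact (mkhelp _ _ _ hv (18 : K) (by
            funext i; fin_cases i <;>
              simp [hessG, Pi.smul_apply, smul_eq_mul] <;> ring)).symm
      · refine ⟨![1, 2], by intro h; simpa using congrFun h 0, ?_, ?_, ?_⟩
        · rw [hessG]; intro h
          have := congrFun h 1; norm_num at this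
        · simp
        · exact (mkhelp _ _ _ hv (18 : K) (by
            funext i; fin_cases i <;>
              simp [hessG, Pi.smul_apply, smul_eq_mul] <;> ring)).symm
      · refine ⟨![1, -1], by intro h; simpa using congrFun h 0, ?_, ?_, ?_⟩
        · rw [hessG]; intro h
          have := congrFun h 0; norm_num at this
        · simp
        · exact (mkhelp _ _ _ hv (18 : K) (by
            funext i; fin_cases i <;>
              simp [hessG, Pi.smul_apply, smul_eq_mul] <;> ring)).symm
end

section
/- For a binary quartic F = Σ_{i=0}^{4} a_i x_0^{4-i} x_1^i with generic coefficients, the ideal of the image of V(F) ⊂ P^1 under the Hessian map h_F: P^1 → P² (sending p to [∂²F/∂x_0²(p), ∂²F/∂x_0∂x_1(p), ∂²F/∂x_1²(p)]) contains the quadric Q₁ = 3a₄z₀₀² − 3a₃z₀₀z₀₁ + 2a₂z₀₁² + a₂z₀₀z₁₁ − 3a₁z₀₁z₁₁ + 3a₀z₁₁², i.e., Q₁ vanishes on h_F(V(F)). -/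
open MvPolynomial

lemma pderiv_natCast_aux {σ R : Type*} [CommSemiring R] (i : σ) (n : ℕ) :
    MvPolynomial.pderiv i (n : MvPolynomial σ R) = 0 := by
  rw [← map_natCast (MvPolynomial.C : R →+* MvPolynomial σ R) n, MvPolynomial.pderiv_C]

set_option maxHeartbeats 2000000 in
/-- For a binary quartic `F = Σ a_i x₀^{4-i} x₁^i`, the quadric
`Q₁ = 3a₄z₀₀² - 3a₃z₀₀z₀₁ + 2a₂z₀₁² + a₂z₀₀z₁₁ - 3a₁z₀₁z₁₁ + 3a₀z₁₁²` vanishes on the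
image of `V(F)` under the Hessian map `p ↦ [F_{x₀x₀}(p), F_{x₀x₁}(p), F_{x₁x₁}(p)]`. -/
theorem quadric_Q1_vanishes_on_binary_quartic_hessian {K : Type*} [Field K]
    [IsAlgClosed K] [CharZero K] (a : Fin 5 → K)
    (F : MvPolynomial (Fin 2) K)
    (hFdef : F = ∑ i : Fin 5,
      MvPolynomial.C (a i) * MvPolynomial.X 0 ^ (4 - (i : ℕ)) *
        MvPolynomial.X 1 ^ (i : ℕ))
    (p : Fin 2 → K) (hp : MvPolynomial.eval p F = 0) :
    letI z00 := MvPolynomial.eval p (MvPolynomial.pderiv 0 (MvPolynomial.pderiv 0 F))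
    letI z01 := MvPolynomial.eval p (MvPolynomial.pderiv 0 (MvPolynomial.pderiv 1 F))
    letI z11 := MvPolynomial.eval p (MvPolynomial.pderiv 1 (MvPolynomial.pderiv 1 F))
    3 * a 4 * z00 ^ 2 - 3 * a 3 * z00 * z01 + 2 * a 2 * z01 ^ 2 +
      a 2 * z00 * z11 - 3 * a 1 * z01 * z11 + 3 * a 0 * z11 ^ 2 = 0 := by
  subst hFdef
  simp only [Fin.sum_univ_five, show ((0 : Fin 5) : ℕ) = 0 from rfl,
    show ((1 : Fin 5) : ℕ) = 1 from rfl, show ((2 : Fin 5) : ℕ) = 2 from rfl,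
    show ((3 : Fin 5) : ℕ) = 3 from rfl, show ((4 : Fin 5) : ℕ) = 4 from rfl,
    map_add, map_mul, map_pow, pderiv_C_mul, pderiv_pow, pderiv_X_self,
    pderiv_X_of_ne (by decide : (1 : Fin 2) ≠ 0), pderiv_X_of_ne (by decide : (0 : Fin 2) ≠ 1),
    pderiv_C, pderiv_mul, pderiv_one, pderiv_natCast_aux, Nat.reduceSub, Nat.reduceAdd, Nat.reduceMul, map_natCast, map_ofNat, eval_C, eval_X,
    eval_pow, eval_mul, eval_add, map_one, map_zero, mul_zero, zero_mul, add_zero, zero_add,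
    mul_one, one_mul, pow_zero, pow_one] at hp ⊢
  linear_combination (36 * a 2 ^ 2 - 108 * a 1 * a 3 + 432 * a 0 * a 4) * hp
end

section
/- Degree-4 Hessian variety is a quadric section of the Veronese: for F ∈ S⁴V with linearly independent second partial derivatives, there exists a quadratic form q on P(S²V) such that the Hessian variety of F (the closure of h_F(V(F))) equals h_F(P^n) ∩ V(q), where h_F(P^n) is the Veronese variety that is the image of the Hessian map on all of P^n. Specifically, one may take q to be a quadratic form whose pullback under h_F is proportional to F. -/
/-!
Applying Euler's formula twice gives `∑ xᵢ xⱼ ∂ᵢ∂ⱼF = 12 F`. The second partials of `F` are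
linearly independent quadrics, as many as the monomials `xᵢ xⱼ` (`i ≤ j`), so they span all
quadrics; writing each `xᵢ xⱼ` as a linear form in them turns `12 F` into a quadratic form `q` in
the second partials, i.e. `q (H_F(p)) = 12 F(p)`. As `q` is homogeneous, its vanishing at a point
of projective space does not depend on the representative.
-/

open MvPolynomial

/-- The Hessian matrix of `F` evaluated at `p`. -/
noncomputable def hessMat {K : Type*} [CommRing K] {n : ℕ}
    (F : MvPolynomial (Fin (n + 1)) K) (p : Fin (n + 1) → K) :
    Matrix (Fin (n + 1)) (Fin (n + 1)) K :=
  Matrix.of fun i j =>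
    MvPolynomial.eval p (MvPolynomial.pderiv i (MvPolynomial.pderiv j F))

theorem LinearIndependent.span_eq_of_forall_mem_span {K V ι : Type*} [DivisionRing K]
    [AddCommGroup V] [Module K V] [Fintype ι] {v w : ι → V} (hv : LinearIndependent K v)
    (hvw : ∀ i, v i ∈ Submodule.span K (Set.range w)) :
    Submodule.span K (Set.range v) = Submodule.span K (Set.range w) :=
  have := FiniteDimensional.span_of_finite K (Set.finite_range w)
  Submodule.eq_of_le_of_finrank_le (Submodule.span_le.2 (Set.range_subset_iff.2 hvw))
    ((finrank_range_le_card w).trans (finrank_span_eq_card hv).ge)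

namespace MvPolynomial

section CommSemiring

variable {σ R : Type*} [CommSemiring R]

theorem IsHomogeneous.eval_smul {q : MvPolynomial σ R} {n : ℕ} (hq : q.IsHomogeneous n)
    (a : R) (x : σ → R) : eval (a • x) q = a ^ n * eval x q := by
  simp only [eval_eq, Finset.mul_sum, Pi.smul_apply, smul_eq_mul, mul_pow,
    Finset.prod_mul_distrib, Finset.prod_pow_eq_pow_sum]
  refine Finset.sum_congr rfl fun d hd => ?_
  have hdeg : ∑ i ∈ d.support, d i = n := by
    simpa [Finsupp.weight_apply, Finsupp.sum] using hq (mem_support_iff.1 hd)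
  rw [hdeg, mul_left_comm]

theorem eval_aeval {τ : Type*} (g : σ → MvPolynomial τ R) (q : MvPolynomial σ R) (p : τ → R) :
    eval p (aeval g q) = eval (fun i => eval p (g i)) q := by
  change aeval p (aeval g q) = _
  rw [← AlgHom.comp_apply, comp_aeval]
  rfl

theorem homogeneousSubmodule_two_eq_span [LinearOrder σ] :
    homogeneousSubmodule σ R 2 =
      Submodule.span R (Set.range fun p : {p : σ × σ // p.1 ≤ p.2} => X p.1.1 * X p.1.2) := by
  rw [← homogeneousSubmodule_one_pow, pow_two, homogeneousSubmodule_one_eq_span_X,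
    Submodule.span_mul_span]
  congr 1
  ext f
  simp only [Set.mem_mul, Set.mem_range, Subtype.exists, Prod.exists]
  constructor
  · rintro ⟨_, ⟨i, rfl⟩, _, ⟨j, rfl⟩, rfl⟩
    rcases le_total i j with hij | hji
    · exact ⟨i, j, hij, rfl⟩
    · exact ⟨j, i, hji, mul_comm _ _⟩
  · rintro ⟨i, j, -, rfl⟩
    exact ⟨_, ⟨i, rfl⟩, _, ⟨j, rfl⟩, rfl⟩

theorem mem_span_range_iff_exists_isHomogeneous_one {A : Type*} [CommSemiring A] [Algebra R A]
    (g : σ → A) (a : A) :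
    a ∈ Submodule.span R (Set.range g) ↔
      ∃ ℓ : MvPolynomial σ R, ℓ.IsHomogeneous 1 ∧ aeval g ℓ = a := by
  have : Submodule.span R (Set.range g) =
      (homogeneousSubmodule σ R 1).map (aeval g).toLinearMap := by
    rw [homogeneousSubmodule_one_eq_span_X, Submodule.map_span, ← Set.range_comp]
    simp [Function.comp_def]
  simp [this]

theorem exists_isHomogeneous_two_aeval_eq_sum [Fintype σ] {A : Type*} [CommSemiring A]
    [Algebra R A] (g a : σ → A) (ha : ∀ i, a i ∈ Submodule.span R (Set.range g)) :
    ∃ q : MvPolynomial σ R, q.IsHomogeneous 2 ∧ aeval g q = ∑ i, a i * g i := by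
  choose ℓ hℓ haℓ using fun i => (mem_span_range_iff_exists_isHomogeneous_one g (a i)).1 (ha i)
  refine ⟨∑ i, ℓ i * X i, IsHomogeneous.sum _ _ _ fun i _ => (hℓ i).mul (isHomogeneous_X R i), ?_⟩
  simp only [map_sum, map_mul, haℓ, aeval_X]

end CommSemiring

theorem span_eq_homogeneousSubmodule_two_of_linearIndependent {σ K : Type*} [Field K]
    [Fintype σ] [LinearOrder σ] (f : {p : σ × σ // p.1 ≤ p.2} → MvPolynomial σ K)
    (hf : ∀ p, (f p).IsHomogeneous 2) (hind : LinearIndependent K f) :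
    Submodule.span K (Set.range f) = homogeneousSubmodule σ K 2 := by
  rw [homogeneousSubmodule_two_eq_span]
  exact hind.span_eq_of_forall_mem_span fun p =>
    homogeneousSubmodule_two_eq_span (σ := σ) (R := K) ▸ hf p

section CommRing

variable {σ R : Type*} [CommRing R] [Fintype σ] {F : MvPolynomial σ R} {m : ℕ}

theorem IsHomogeneous.sum_X_mul_X_mul_pderiv_pderiv (hF : F.IsHomogeneous m) :
    ∑ ij : σ × σ, X ij.1 * X ij.2 * pderiv ij.1 (pderiv ij.2 F) = (m * (m - 1)) • F := by
  have euler₂ : ∀ j, ∑ i, X i * pderiv i (pderiv j F) = (m - 1) • pderiv j F :=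
    fun j => (hF.pderiv (i := j)).sum_X_mul_pderiv
  calc ∑ ij : σ × σ, X ij.1 * X ij.2 * pderiv ij.1 (pderiv ij.2 F)
      = ∑ j, X j * ∑ i, X i * pderiv i (pderiv j F) := by
        rw [Fintype.sum_prod_type, Finset.sum_comm]
        simp only [Finset.mul_sum]
        exact Finset.sum_congr rfl fun j _ => Finset.sum_congr rfl fun i _ => by ring
    _ = (m - 1) • ∑ j, X j * pderiv j F := by
        simp only [euler₂, mul_smul_comm, Finset.smul_sum]
    _ = (m * (m - 1)) • F := by
        rw [hF.sum_X_mul_pderiv, smul_smul, mul_comm]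

end CommRing

end MvPolynomial

theorem Projectivization.forall_mk_eq_imp_eval_eq_zero_iff {ι K V : Type*} [Field K]
    [AddCommGroup V] [Module K V] {q : MvPolynomial ι K} {d : ℕ} (hq : q.IsHomogeneous d)
    (coord : V →ₗ[K] ι → K) {v : V} (hv : v ≠ 0) :
    (∀ (w : V) (hw : w ≠ 0), mk K v hv = mk K w hw → eval (coord w) q = 0) ↔
      eval (coord v) q = 0 := by
  refine ⟨fun h => h v hv rfl, fun hq0 w hw hvw => ?_⟩
  obtain ⟨a, rfl⟩ := (mk_eq_mk_iff K _ _ hv hw).1 hvw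
  rw [Units.smul_def, map_smul, hq.eval_smul] at hq0
  exact (mul_eq_zero.1 hq0).resolve_left (pow_ne_zero _ a.ne_zero)

theorem quartic_hessian_variety_is_quadric_section_of_veronese_general {K : Type*} [Field K]
    [CharZero K] {n : ℕ}
    (F : MvPolynomial (Fin (n + 1)) K) (hF : F.IsHomogeneous 4)
    (hind : LinearIndependent K
      (fun ij : { p : Fin (n + 1) × Fin (n + 1) // p.1 ≤ p.2 } =>
        MvPolynomial.pderiv ij.1.1 (MvPolynomial.pderiv ij.1.2 F))) :
    ∃ q : MvPolynomial (Fin (n + 1) × Fin (n + 1)) K, q.IsHomogeneous 2 ∧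
      (∃ c : K, c ≠ 0 ∧
        MvPolynomial.aeval
          (fun ij : Fin (n + 1) × Fin (n + 1) =>
            MvPolynomial.pderiv ij.1 (MvPolynomial.pderiv ij.2 F)) q =
          MvPolynomial.C c * F) ∧
      { x : Projectivization K (Matrix (Fin (n + 1)) (Fin (n + 1)) K) |
          ∃ (p : Fin (n + 1) → K) (_ : p ≠ 0) (hv : hessMat F p ≠ 0),
            MvPolynomial.eval p F = 0 ∧ x = Projectivization.mk K (hessMat F p) hv } =
        { x : Projectivization K (Matrix (Fin (n + 1)) (Fin (n + 1)) K) |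
            ∃ (p : Fin (n + 1) → K) (_ : p ≠ 0) (hv : hessMat F p ≠ 0),
              x = Projectivization.mk K (hessMat F p) hv } ∩
          { x | ∀ (A : Matrix (Fin (n + 1)) (Fin (n + 1)) K) (hA : A ≠ 0),
              x = Projectivization.mk K A hA →
                MvPolynomial.eval (fun ij : Fin (n + 1) × Fin (n + 1) => A ij.1 ij.2) q
                  = 0 } := by
  set g : Fin (n + 1) × Fin (n + 1) → MvPolynomial (Fin (n + 1)) K :=
    fun ij => pderiv ij.1 (pderiv ij.2 F)
  have hg : ∀ ij, (g ij).IsHomogeneous 2 := fun ij => hF.pderiv.pderiv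
  have hspan := span_eq_homogeneousSubmodule_two_of_linearIndependent _ (fun p => hg p.1) hind
  have hXX : ∀ ij : Fin (n + 1) × Fin (n + 1),
      X ij.1 * X ij.2 ∈ Submodule.span K (Set.range g) := fun ij =>
    Submodule.span_mono (Set.range_comp_subset_range Subtype.val g)
      (hspan ▸ (mem_homogeneousSubmodule 2 _).2
        ((isHomogeneous_X K ij.1).mul (isHomogeneous_X K ij.2)))
  obtain ⟨q, hq, hqg⟩ := exists_isHomogeneous_two_aeval_eq_sum g _ hXX
  have hpull : aeval g q = C 12 * F := by
    rw [hqg, hF.sum_X_mul_X_mul_pderiv_pderiv, nsmul_eq_mul, ← map_natCast C]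
    norm_num
  have heval : ∀ p, eval (fun ij => hessMat F p ij.1 ij.2) q = 12 * eval p F := fun p => by
    rw [show (fun ij => hessMat F p ij.1 ij.2) = fun ij => eval p (g ij) from rfl,
      ← eval_aeval, hpull, eval_mul, eval_C]
  let entries : Matrix (Fin (n + 1)) (Fin (n + 1)) K →ₗ[K] Fin (n + 1) × Fin (n + 1) → K :=
    { toFun := fun A ij => A ij.1 ij.2, map_add' := fun _ _ => rfl, map_smul' := fun _ _ => rfl }
  have hzero := fun p (hv : hessMat F p ≠ 0) =>
    Projectivization.forall_mk_eq_imp_eval_eq_zero_iff hq entries hv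
  refine ⟨q, hq, ⟨12, by norm_num, hpull⟩, ?_⟩
  ext x
  simp only [Set.mem_ofPred_eq, Set.mem_inter_iff]
  constructor
  · rintro ⟨p, hp, hv, hFp, rfl⟩
    exact ⟨⟨p, hp, hv, rfl⟩, (hzero p hv).2 ((heval p).trans (by rw [hFp, mul_zero]))⟩
  · rintro ⟨⟨p, hp, hv, rfl⟩, hqx⟩
    refine ⟨p, hp, hv, ?_, rfl⟩
    simpa [heval] using hqx _ hv rfl

/-- For a quartic `F` whose Hessian map is a Veronese embedding, the
Hessian variety `h_F(V(F))` is the intersection of the Veronese variety `h_F(Pⁿ)` with a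
quadric hypersurface `V(q)`, where the pullback of `q` along `h_F` is proportional
to `F`. -/
theorem quartic_hessian_variety_is_quadric_section_of_veronese {K : Type*} [Field K]
    [IsAlgClosed K] [CharZero K] {n : ℕ}
    (F : MvPolynomial (Fin (n + 1)) K) (hF : F.IsHomogeneous 4)
    (hind : LinearIndependent K
      (fun ij : { p : Fin (n + 1) × Fin (n + 1) // p.1 ≤ p.2 } =>
        MvPolynomial.pderiv ij.1.1 (MvPolynomial.pderiv ij.1.2 F))) :
    ∃ q : MvPolynomial (Fin (n + 1) × Fin (n + 1)) K, q.IsHomogeneous 2 ∧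
      (∃ c : K, c ≠ 0 ∧
        MvPolynomial.aeval
          (fun ij : Fin (n + 1) × Fin (n + 1) =>
            MvPolynomial.pderiv ij.1 (MvPolynomial.pderiv ij.2 F)) q =
          MvPolynomial.C c * F) ∧
      { x : Projectivization K (Matrix (Fin (n + 1)) (Fin (n + 1)) K) |
          ∃ (p : Fin (n + 1) → K) (_ : p ≠ 0) (hv : hessMat F p ≠ 0),
            MvPolynomial.eval p F = 0 ∧ x = Projectivization.mk K (hessMat F p) hv } =
        { x : Projectivization K (Matrix (Fin (n + 1)) (Fin (n + 1)) K) |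
            ∃ (p : Fin (n + 1) → K) (_ : p ≠ 0) (hv : hessMat F p ≠ 0),
              x = Projectivization.mk K (hessMat F p) hv } ∩
          { x | ∀ (A : Matrix (Fin (n + 1)) (Fin (n + 1)) K) (hA : A ≠ 0),
              x = Projectivization.mk K A hA →
                MvPolynomial.eval (fun ij : Fin (n + 1) × Fin (n + 1) => A ij.1 ij.2) q
                  = 0 } :=
  quartic_hessian_variety_is_quadric_section_of_veronese_general F hF hind
end
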